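/- Let ε ≥ 0, R > 0, and let α > 0 be a real number with J_0(α) = 0. Set β = −α² / (R·(1 + ε·α²)) and define w : (0,1] → ℝ by w(r) = J_0(α·r). Then (1/R + β·ε)·(w''(r) + w'(r)/r) = β·w(r) for all r ∈ (0,1), and w(1) = 0. In other words, (w, ψ) = (J_0(α·), 0) is an eigensolution of the separated eigenvalue problem with azimuthal wavenumber m = 0 and eigenvalue β. -/

import Mathlib

/-!
Write `J₀(x) = F(x²/4)` with `F(z) = ∑ bₖ zᵏ`, `bₖ = (-1)ᵏ/(k!)²`. Differentiating the entire
series `F` termwise gives `z F'' + F' = (z F')' = ∑ (n+1)² bₙ₊₁ zⁿ = -F`, since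
`(n+1)² bₙ₊₁ = -bₙ`; by the chain rule this is Bessel's equation `x J₀'' + J₀' + x J₀ = 0`.
Substituting `x = αr` gives `Δ₀ w = -α² w`, and `β` is exactly the solution of
`(1/R + βε)(-α²) = β`.
-/

noncomputable section

/-- The (real) Bessel function of the first kind of integer order m ≥ 0,
`J_m(x) = Σ_{k≥0} (−1)^k/(k!(k+m)!) (x/2)^{2k+m}`. -/
def besselJr (m : ℕ) (x : ℝ) : ℝ :=
  ∑' k : ℕ, ((-1 : ℝ) ^ k / ((Nat.factorial k : ℝ) * (Nat.factorial (k + m) : ℝ)))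
    * (x / 2) ^ (2 * k + m)

section EntireSeries

variable {𝕜 : Type*} [RCLike 𝕜] {a : ℕ → 𝕜}

def IsEntireSeries (a : ℕ → 𝕜) : Prop := ∀ ρ : ℝ, Summable fun n => ‖a n‖ * ρ ^ n

def powerSeriesSum (a : ℕ → 𝕜) (z : 𝕜) : 𝕜 := ∑' n, a n * z ^ n

def derivCoeff (a : ℕ → 𝕜) (n : ℕ) : 𝕜 := (n + 1) * a (n + 1)

theorem IsEntireSeries.summable (ha : IsEntireSeries a) (x : 𝕜) :
    Summable fun n => a n * x ^ n :=
  .of_norm_bounded (ha ‖x‖) fun n => by rw [norm_mul, norm_pow]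

theorem IsEntireSeries.isEntireSeries_derivCoeff (ha : IsEntireSeries a) :
    IsEntireSeries (derivCoeff a) := by
  intro ρ
  refine .of_norm_bounded ((summable_nat_add_iff 1).mpr (ha (2 * |ρ| + 1))) fun n => ?_
  have hn : ((n : ℝ) + 1) ≤ 2 ^ n := by exact_mod_cast Nat.lt_two_pow_self
  calc ‖‖derivCoeff a n‖ * ρ ^ n‖ = ‖a (n + 1)‖ * ((n + 1) * |ρ| ^ n) := by
        simp only [derivCoeff, norm_mul, norm_pow, Real.norm_eq_abs, abs_norm]
        norm_cast; ring
    _ ≤ ‖a (n + 1)‖ * (2 * |ρ| + 1) ^ (n + 1) := by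
        gcongr
        calc ((n : ℝ) + 1) * |ρ| ^ n ≤ 2 ^ n * |ρ| ^ n := by gcongr
          _ = (2 * |ρ|) ^ n := (mul_pow _ _ _).symm
          _ ≤ (2 * |ρ| + 1) ^ n := by gcongr; linarith
          _ ≤ (2 * |ρ| + 1) ^ (n + 1) := pow_le_pow_right₀ (by linarith [abs_nonneg ρ]) n.le_succ

theorem IsEntireSeries.hasDerivAt (ha : IsEntireSeries a) (x : 𝕜) :
    HasDerivAt (powerSeriesSum a) (powerSeriesSum (derivCoeff a) x) x := by
  have hshift : powerSeriesSum a = fun y => a 0 + ∑' n, a (n + 1) * y ^ (n + 1) :=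
    funext fun y => by simpa [powerSeriesSum] using (ha.summable y).tsum_eq_zero_add
  rw [hshift]
  refine .const_add _ <| hasDerivAt_tsum_of_isPreconnected
    (g := fun n y => a (n + 1) * y ^ (n + 1)) (g' := fun n y => derivCoeff a n * y ^ n)
    (ha.isEntireSeries_derivCoeff (‖x‖ + 1)) Metric.isOpen_ball
    (convex_ball (0 : 𝕜) (‖x‖ + 1)).isPreconnected (fun n y _ => ?_)
    (fun n y hy => ?_) (y₀ := 0) (y := x) (Metric.mem_ball_self (by positivity)) (by simp)
    (by simp)
  · refine ((hasDerivAt_pow (n + 1) y).const_mul (a (n + 1))).congr_deriv ?_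
    simp only [derivCoeff, Nat.add_sub_cancel, Nat.cast_succ]
    ring
  · rw [norm_mul, norm_pow]
    gcongr
    simpa using (mem_ball_zero_iff.mp hy).le

theorem IsEntireSeries.mul_powerSeriesSum_derivCoeff_derivCoeff_add (ha : IsEntireSeries a)
    (z : 𝕜) :
    z * powerSeriesSum (derivCoeff (derivCoeff a)) z + powerSeriesSum (derivCoeff a) z =
      powerSeriesSum (fun n => (n + 1) * derivCoeff a n) z := by
  have ha₁ := ha.isEntireSeries_derivCoeff
  have ha₂ := ha₁.isEntireSeries_derivCoeff
  have hterm (n : ℕ) : z * (derivCoeff (derivCoeff a) n * z ^ n) =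
      ((n + 1 : ℕ) : 𝕜) * derivCoeff a (n + 1) * z ^ (n + 1) := by
    simp only [derivCoeff, pow_succ]
    push_cast
    ring
  have hsum : Summable fun n : ℕ => (n : 𝕜) * derivCoeff a n * z ^ n :=
    (summable_nat_add_iff 1).mp <| ((ha₂.summable z).mul_left z).congr hterm
  have hshift : z * powerSeriesSum (derivCoeff (derivCoeff a)) z =
      ∑' n, n * derivCoeff a n * z ^ n := by
    rw [hsum.tsum_eq_zero_add, powerSeriesSum, ← tsum_mul_left]
    simp only [CharP.cast_eq_zero, zero_mul, zero_add, hterm]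
  rw [hshift, powerSeriesSum, powerSeriesSum, ← hsum.tsum_add (ha₁.summable z)]
  exact tsum_congr fun n => by ring

end EntireSeries

def besselJ0Coeff (k : ℕ) : ℝ := (-1) ^ k / (k.factorial : ℝ) ^ 2

theorem isEntireSeries_besselJ0Coeff : IsEntireSeries besselJ0Coeff := by
  intro ρ
  refine .of_norm_bounded (Real.summable_pow_div_factorial |ρ|) fun k => ?_
  have hk : (1 : ℝ) ≤ k.factorial := by exact_mod_cast k.factorial_pos
  rw [norm_mul, norm_norm, besselJ0Coeff, norm_div, norm_pow, norm_pow, norm_neg, norm_one,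
    one_pow, Real.norm_eq_abs, Real.norm_eq_abs, Nat.abs_cast, abs_pow, div_mul_eq_mul_div,
    one_mul, sq]
  exact div_le_div_of_nonneg_left (by positivity) (by positivity)
    (le_mul_of_one_le_left (by positivity) hk)

theorem succ_mul_derivCoeff_besselJ0Coeff (n : ℕ) :
    (n + 1) * derivCoeff besselJ0Coeff n = -besselJ0Coeff n := by
  simp only [derivCoeff, besselJ0Coeff, Nat.factorial_succ, pow_succ]
  push_cast
  field_simp

theorem besselJr_zero_eq_powerSeriesSum (x : ℝ) :
    besselJr 0 x = powerSeriesSum besselJ0Coeff (x ^ 2 / 4) := by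
  refine tsum_congr fun k => ?_
  simp only [besselJ0Coeff, add_zero, pow_mul, div_pow]
  ring

theorem deriv_deriv_comp_mul_left {𝕜 : Type*} [NontriviallyNormedField 𝕜] (f : 𝕜 → 𝕜)
    (c x : 𝕜) :
    deriv (deriv fun y => f (c * y)) x = c ^ 2 * deriv (deriv f) (c * x) := by
  have h : (deriv fun y => f (c * y)) = fun y => c * deriv f (c * y) :=
    funext fun y => deriv_comp_mul_left c f y
  rw [h, deriv_const_mul_field, deriv_comp_mul_left, smul_eq_mul]
  ring

theorem besselJr_zero_ode (x : ℝ) :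
    x * deriv (deriv (besselJr 0)) x + deriv (besselJr 0) x + x * besselJr 0 x = 0 := by
  have hb := isEntireSeries_besselJ0Coeff
  have hq (y : ℝ) : HasDerivAt (fun y => y ^ 2 / 4) (y / 2) y := by
    refine ((hasDerivAt_pow 2 y).div_const 4).congr_deriv ?_
    norm_num
    ring
  have hJ' : deriv (besselJr 0) =
      fun y => y / 2 * powerSeriesSum (derivCoeff besselJ0Coeff) (y ^ 2 / 4) := by
    funext y
    rw [funext besselJr_zero_eq_powerSeriesSum]
    exact ((hb.hasDerivAt _).comp y (hq y)).deriv.trans (mul_comm _ _)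
  have hJ'' : deriv (deriv (besselJr 0)) x =
      1 / 2 * powerSeriesSum (derivCoeff besselJ0Coeff) (x ^ 2 / 4) +
        x / 2 * (powerSeriesSum (derivCoeff (derivCoeff besselJ0Coeff)) (x ^ 2 / 4) * (x / 2)) := by
    rw [hJ']
    exact (((hasDerivAt_id x).div_const 2).mul
      ((hb.isEntireSeries_derivCoeff.hasDerivAt _).comp x (hq x))).deriv
  have hF := hb.mul_powerSeriesSum_derivCoeff_derivCoeff_add (x ^ 2 / 4)
  simp only [succ_mul_derivCoeff_besselJ0Coeff, powerSeriesSum, tsum_neg, neg_mul] at hF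
  rw [hJ'', hJ', besselJr_zero_eq_powerSeriesSum]
  unfold powerSeriesSum
  linear_combination x * hF

theorem m_zero_first_eigenmodes_general (ε R α : ℝ) (hε : 0 ≤ ε) (hR : 0 < R)
    (hroot : besselJr 0 α = 0) (β : ℝ) (hβ : β = -α ^ 2 / (R * (1 + ε * α ^ 2)))
    (w : ℝ → ℝ) (hw : w = fun r => besselJr 0 (α * r)) :
    (∀ r ∈ Set.Ioo (0 : ℝ) 1,
      (1 / R + β * ε) * (deriv (deriv w) r + deriv w r / r) = β * w r)
    ∧ w 1 = 0 := by
  subst hw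
  refine ⟨fun r hr => ?_, by simpa using hroot⟩
  have hβ' : (1 / R + β * ε) * -α ^ 2 = β := by
    have : 0 < 1 + ε * α ^ 2 := by positivity
    rw [hβ]
    field_simp
    ring
  have hode : α ^ 2 * deriv (deriv (besselJr 0)) (α * r) + α * deriv (besselJr 0) (α * r) / r =
      -α ^ 2 * besselJr 0 (α * r) := by
    field_simp [hr.1.ne']
    linear_combination α * besselJr_zero_ode (α * r)
  rw [deriv_deriv_comp_mul_left, deriv_comp_mul_left, smul_eq_mul, hode]
  linear_combination besselJr 0 (α * r) * hβ'

/-- The first family of m = 0 eigenmodes: if α is a zero of J₀ then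
`w(r) = J₀(αr)` solves `(1/R + βε)Δ₀w = βw` with `w(1) = 0`, where
`β = −α²/(R(1+εα²))`. -/
theorem m_zero_first_eigenmodes (ε R α : ℝ) (hε : 0 ≤ ε) (hR : 0 < R) (hα : 0 < α)
    (hroot : besselJr 0 α = 0) (β : ℝ) (hβ : β = -α ^ 2 / (R * (1 + ε * α ^ 2)))
    (w : ℝ → ℝ) (hw : w = fun r => besselJr 0 (α * r)) :
    (∀ r ∈ Set.Ioo (0 : ℝ) 1,
      (1 / R + β * ε) * (deriv (deriv w) r + deriv w r / r) = β * w r)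
    ∧ w 1 = 0 :=
  m_zero_first_eigenmodes_general ε R α hε hR hroot β hβ w hw
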